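/- (Joint-state identity in the proof of Theorem 3.) Work in the 4-qubit space EuclideanSpace ℂ (Fin 4 → ZMod 2) with qubits ordered (s₁, s₂, r, m), where s₁ carries the message qubit φ = α|0⟩ + β|1⟩ (α, β ∈ ℂ) and (s₂, r, m) carry the 3-qubit W state W₃. Then applying CNOT with control s₁ and target s₂, followed by the Hadamard gate H on qubit s₁, to φ ⊗ W₃ yields exactly (1/√6)[ |00⟩_{s₁s₂}((α|1⟩ + β|0⟩)_r|0⟩_m + α|0⟩_r|1⟩_m) + |01⟩_{s₁s₂}((α|0⟩ + β|1⟩)_r|0⟩_m + β|0⟩_r|1⟩_m) + |10⟩_{s₁s₂}((α|1⟩ − β|0⟩)_r|0⟩_m + α|0⟩_r|1⟩_m) + |11⟩_{s₁s₂}((α|0⟩ − β|1⟩)_r|0⟩_m − β|0⟩_r|1⟩_m) ]. -/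

import Mathlib

/-- Amplitude of the 3-qubit W state at bitstring `(a, b, c)`. -/
noncomputable def w3amp (a b c : ZMod 2) : ℂ :=
  if (a = 1 ∧ b = 0 ∧ c = 0) ∨ (a = 0 ∧ b = 1 ∧ c = 0) ∨ (a = 0 ∧ b = 0 ∧ c = 1)
  then ((1 / Real.sqrt 3 : ℝ) : ℂ) else 0

/-- The joint state `φ ⊗ W₃` with `φ = α|0⟩ + β|1⟩` on qubit `s₁ = 0` and the
3-qubit W state on qubits `(s₂, r, m) = (1, 2, 3)`. -/
noncomputable def jointState (α β : ℂ) : EuclideanSpace ℂ (Fin 4 → ZMod 2) :=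
  WithLp.toLp 2 (fun x => (if x 0 = 0 then α else β) * w3amp (x 1) (x 2) (x 3))

/-- CNOT with control qubit `0` and target qubit `1` (a self-inverse basis permutation). -/
noncomputable def cnot01 (ψ : EuclideanSpace ℂ (Fin 4 → ZMod 2)) :
    EuclideanSpace ℂ (Fin 4 → ZMod 2) :=
  WithLp.toLp 2 (fun x => ψ (Function.update x 1 (x 1 + x 0)))

/-- Hadamard gate on qubit `0`. -/
noncomputable def had0 (ψ : EuclideanSpace ℂ (Fin 4 → ZMod 2)) :
    EuclideanSpace ℂ (Fin 4 → ZMod 2) :=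
  WithLp.toLp 2 (fun x => ((1 / Real.sqrt 2 : ℝ) : ℂ) *
    (ψ (Function.update x 0 0) + (if x 0 = 0 then 1 else -1) * ψ (Function.update x 0 1)))

/-- The state `|Φ⟩₁` obtained by applying CNOT (control `s₁`, target `s₂`) and then
Hadamard on `s₁` to `(α|0⟩ + β|1⟩) ⊗ W₃`. -/
noncomputable def Phi1 (α β : ℂ) : EuclideanSpace ℂ (Fin 4 → ZMod 2) :=
  had0 (cnot01 (jointState α β))

/-- Computational-basis vector `|b₀b₁b₂b₃⟩`. -/
noncomputable def ket4 (b0 b1 b2 b3 : ZMod 2) : EuclideanSpace ℂ (Fin 4 → ZMod 2) :=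
  EuclideanSpace.single ![b0, b1, b2, b3] 1

/-
After the CNOT the state is `α |0⟩ ⊗ W₃ + β |1⟩ ⊗ (X ⊗ 1 ⊗ 1) W₃`; expanding `W₃` in the
computational basis, both gates act on basis vectors by explicit formulas, and the Hadamard
contributes the factor `1/√2` that turns the `1/√3` of `W₃` into `1/√6`.
-/

theorem ZMod.two_eq_zero_or_one : ∀ a : ZMod 2, a = 0 ∨ a = 1 := by decide

theorem eq_vecCons_four {α : Type*} (x : Fin 4 → α) : x = ![x 0, x 1, x 2, x 3] := by
  funext i; fin_cases i <;> rfl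

theorem update_vecCons_four_zero {α : Type*} (a b c d e : α) :
    Function.update ![a, b, c, d] 0 e = ![e, b, c, d] := by
  funext i; fin_cases i <;> rfl

theorem update_vecCons_four_one {α : Type*} (a b c d e : α) :
    Function.update ![a, b, c, d] 1 e = ![a, e, c, d] := by
  funext i; fin_cases i <;> rfl

theorem ket4_apply (a b c d a' b' c' d' : ZMod 2) :
    ket4 a b c d ![a', b', c', d'] = if a' = a ∧ b' = b ∧ c' = c ∧ d' = d then 1 else 0 := by
  simp [ket4, PiLp.single_apply]

theorem cnot01_add (ψ φ : EuclideanSpace ℂ (Fin 4 → ZMod 2)) :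
    cnot01 (ψ + φ) = cnot01 ψ + cnot01 φ := rfl

theorem cnot01_smul (c : ℂ) (ψ : EuclideanSpace ℂ (Fin 4 → ZMod 2)) :
    cnot01 (c • ψ) = c • cnot01 ψ := rfl

theorem cnot01_ket4 (a b c d : ZMod 2) : cnot01 (ket4 a b c d) = ket4 a (b + a) c d := by
  ext x
  rw [eq_vecCons_four x]
  simp only [cnot01, PiLp.toLp_apply, Matrix.cons_val_zero, Matrix.cons_val_one,
    update_vecCons_four_one, ket4_apply]
  have add_eq_iff : ∀ u v w : ZMod 2, u + v = w ↔ u = w + v := by decide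
  refine if_congr ?_ rfl rfl
  rw [add_eq_iff]
  constructor <;> rintro ⟨rfl, h⟩ <;> simp_all

theorem had0_add (ψ φ : EuclideanSpace ℂ (Fin 4 → ZMod 2)) :
    had0 (ψ + φ) = had0 ψ + had0 φ := by
  ext x; simp only [had0, PiLp.add_apply]; ring

theorem had0_smul (c : ℂ) (ψ : EuclideanSpace ℂ (Fin 4 → ZMod 2)) :
    had0 (c • ψ) = c • had0 ψ := by
  ext x; simp only [had0, PiLp.smul_apply, smul_eq_mul]; ring

theorem had0_ket4_zero (b c d : ZMod 2) :
    had0 (ket4 0 b c d) = ((1 / Real.sqrt 2 : ℝ) : ℂ) • (ket4 0 b c d + ket4 1 b c d) := by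
  ext x
  rw [eq_vecCons_four x]
  simp only [had0, PiLp.toLp_apply, PiLp.smul_apply, PiLp.add_apply, smul_eq_mul,
    Matrix.cons_val_zero, update_vecCons_four_zero, ket4_apply]
  rcases ZMod.two_eq_zero_or_one (x 0) with h | h <;> simp [h]

theorem had0_ket4_one (b c d : ZMod 2) :
    had0 (ket4 1 b c d) = ((1 / Real.sqrt 2 : ℝ) : ℂ) • (ket4 0 b c d - ket4 1 b c d) := by
  ext x
  rw [eq_vecCons_four x]
  simp only [had0, PiLp.toLp_apply, PiLp.smul_apply, PiLp.sub_apply, smul_eq_mul,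
    Matrix.cons_val_zero, update_vecCons_four_zero, ket4_apply]
  rcases ZMod.two_eq_zero_or_one (x 0) with h | h <;> simp [h, neg_ite]

theorem jointState_eq_sum_ket4 (α β : ℂ) :
    jointState α β = ((1 / Real.sqrt 3 : ℝ) : ℂ) •
      (α • (ket4 0 1 0 0 + ket4 0 0 1 0 + ket4 0 0 0 1) +
        β • (ket4 1 1 0 0 + ket4 1 0 1 0 + ket4 1 0 0 1)) := by
  ext x
  rw [eq_vecCons_four x]
  simp only [jointState, w3amp, PiLp.toLp_apply, PiLp.smul_apply, PiLp.add_apply, smul_eq_mul,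
    Matrix.cons_val_zero, Matrix.cons_val_one, Matrix.cons_val_two, Matrix.cons_val_three,
    ket4_apply]
  rcases ZMod.two_eq_zero_or_one (x 0) with h0 | h0 <;>
    rcases ZMod.two_eq_zero_or_one (x 1) with h1 | h1 <;>
    rcases ZMod.two_eq_zero_or_one (x 2) with h2 | h2 <;>
    rcases ZMod.two_eq_zero_or_one (x 3) with h3 | h3 <;>
    simp [h0, h1, h2, h3, mul_comm]

theorem one_div_sqrt_six :
    ((1 / Real.sqrt 6 : ℝ) : ℂ) = ((1 / Real.sqrt 2 : ℝ) : ℂ) * ((1 / Real.sqrt 3 : ℝ) : ℂ) := by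
  rw [show (6 : ℝ) = 2 * 3 by norm_num, Real.sqrt_mul zero_le_two, ← one_div_mul_one_div]
  push_cast; rfl

theorem stmt9 (α β : ℂ) :
    Phi1 α β = ((1 / Real.sqrt 6 : ℝ) : ℂ) •
      ((α • ket4 0 0 1 0 + β • ket4 0 0 0 0 + α • ket4 0 0 0 1) +
       (α • ket4 0 1 0 0 + β • ket4 0 1 1 0 + β • ket4 0 1 0 1) +
       (α • ket4 1 0 1 0 - β • ket4 1 0 0 0 + α • ket4 1 0 0 1) +
       (α • ket4 1 1 0 0 - β • ket4 1 1 1 0 - β • ket4 1 1 0 1)) := by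
  have one_add_one : (1 : ZMod 2) + 1 = 0 := rfl
  simp only [Phi1, jointState_eq_sum_ket4, cnot01_add, cnot01_smul, cnot01_ket4, add_zero,
    zero_add, one_add_one, had0_add, had0_smul, had0_ket4_zero, had0_ket4_one, one_div_sqrt_six]
  module
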